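/- The maps σ and τ are mutually inverse, giving a biregular isomorphism between ℙ³(ℝ) × ℙ³(ℝ) and Bl_E(S): τ∘σ = id on ℙ³(ℝ)×ℙ³(ℝ) and σ∘τ = id on Bl_E(S). -/

import Mathlib

/-- The defining conditions of `Bl_E(S) ⊂ ℙ⁷(ℝ) × ℙ³(ℝ)`, on homogeneous coordinates. -/
def inBl (x y w : Fin 4 → ℝ) : Prop :=
  (∑ i : Fin 4, x i * y i = 0) ∧ (∑ i : Fin 4, y i * w i = 0) ∧
    ∀ i j : Fin 4, x i * w j = x j * w i

/-- The `x`-part of `σ([w], [r,s,t,u])`: `xᵢ = wᵢ r`. -/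
def sigmaX (w p : Fin 4 → ℝ) : Fin 4 → ℝ := fun i => w i * p 0

/-- The `y`-part of `σ([w], [r,s,t,u])`. -/
noncomputable def sigmaY (w p : Fin 4 → ℝ) : Fin 4 → ℝ :=
  ![(-(w 1 * p 1) - w 2 * p 2 - w 3 * p 3) / 2,
    (w 0 * p 1 + w 3 * p 2 - w 2 * p 3) / 2,
    (-(w 3 * p 1) + w 0 * p 2 + w 1 * p 3) / 2,
    (w 2 * p 1 - w 1 * p 2 + w 0 * p 3) / 2]

/-- The quadruple `(r, s, t, u)` of `τ([x, y], [w])`. -/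
def tauP (x y w : Fin 4 → ℝ) : Fin 4 → ℝ :=
  ![w 0 * x 0 + w 1 * x 1 + w 2 * x 2 + w 3 * x 3,
    2 * (-(w 1 * y 0) + w 0 * y 1 - w 3 * y 2 + w 2 * y 3),
    2 * (-(w 2 * y 0) + w 3 * y 1 + w 0 * y 2 - w 1 * y 3),
    2 * (-(w 3 * y 0) - w 2 * y 1 + w 1 * y 2 + w 0 * y 3)]

/-!
Identify `ℝ⁴` with the quaternions. Then `σ([w], [r, q])`, with `q = s i + t j + u k` pure, is
`x = r w`, `y = q w / 2`, and `τ` reads off `r |w|² = ⟨w, x⟩` and `q |w|² = 2 Im (y w̄)`.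
For `τ ∘ σ` this is `y w̄ = q |w|² / 2`. For `σ ∘ τ`, the condition `⟨y, w⟩ = 0` says that
`y w̄` is pure, so `Im (y w̄) w = y |w|²`, while the vanishing of the minors `xᵢ wⱼ - xⱼ wᵢ`
makes `x` proportional to `w`, whence `⟨w, x⟩ w = |w|² x`.
-/

open Quaternion

section

variable {R : Type*} [CommRing R]

theorem Quaternion.ext_re_im {a b : ℍ[R]} (hre : a.re = b.re) (him : a.im = b.im) : a = b := by
  rw [← re_add_im a, ← re_add_im b, hre, him]

theorem Quaternion.im_mul_mul_star (q w : ℍ[R]) : (q * w * star w).im = normSq w • q.im := by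
  rw [mul_assoc, self_mul_star, mul_coe_eq_smul, im_smul]

theorem Quaternion.im_mul_star_mul_of_re_eq_zero {y w : ℍ[R]} (h : (y * star w).re = 0) :
    (y * star w).im * w = normSq w • y := by
  have him : (y * star w).im = y * star w := by
    simpa [h] using re_add_im (y * star w)
  rw [him, mul_assoc, star_mul_self, mul_coe_eq_smul]

theorem dotProduct_smul_eq_of_cross_mul_eq {ι : Type*} [Fintype ι] {x w : ι → R}
    (h : ∀ i j, x i * w j = x j * w i) : (w ⬝ᵥ x) • w = (w ⬝ᵥ w) • x := by
  ext i
  simp only [Pi.smul_apply, smul_eq_mul, dotProduct, Finset.sum_mul]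
  exact Finset.sum_congr rfl fun j _ => by rw [mul_assoc, ← h, mul_assoc, mul_comm (x i)]

end

noncomputable def toQuaternion : (Fin 4 → ℝ) ≃ₗ[ℝ] ℍ[ℝ] :=
  (QuaternionAlgebra.linearEquivTuple _ _ _).symm

@[simp] theorem toQuaternion_re (v : Fin 4 → ℝ) : (toQuaternion v).re = v 0 := rfl
@[simp] theorem toQuaternion_imI (v : Fin 4 → ℝ) : (toQuaternion v).imI = v 1 := rfl
@[simp] theorem toQuaternion_imJ (v : Fin 4 → ℝ) : (toQuaternion v).imJ = v 2 := rfl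
@[simp] theorem toQuaternion_imK (v : Fin 4 → ℝ) : (toQuaternion v).imK = v 3 := rfl

theorem normSq_toQuaternion (w : Fin 4 → ℝ) : normSq (toQuaternion w) = w ⬝ᵥ w := by
  simp [normSq_def', dotProduct, Fin.sum_univ_four, sq]

theorem re_toQuaternion_mul_star (y w : Fin 4 → ℝ) :
    (toQuaternion y * star (toQuaternion w)).re = y ⬝ᵥ w := by
  simp [dotProduct, Fin.sum_univ_four]

theorem sigmaX_eq_smul (w p : Fin 4 → ℝ) : sigmaX w p = p 0 • w := by
  ext i
  exact mul_comm _ _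

theorem toQuaternion_sigmaY (w p : Fin 4 → ℝ) :
    toQuaternion (sigmaY w p) = (2 : ℝ)⁻¹ • ((toQuaternion p).im * toQuaternion w) := by
  ext <;> simp [sigmaY] <;> ring

theorem tauP_zero (x y w : Fin 4 → ℝ) : tauP x y w 0 = w ⬝ᵥ x := by
  simp [tauP, dotProduct, Fin.sum_univ_four]

theorem im_toQuaternion_tauP (x y w : Fin 4 → ℝ) :
    (toQuaternion (tauP x y w)).im = (2 : ℝ) • (toQuaternion y * star (toQuaternion w)).im := by
  ext <;> simp [tauP] <;> ring

theorem tauP_sigmaX_sigmaY (w p : Fin 4 → ℝ) :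
    tauP (sigmaX w p) (sigmaY w p) w = (w ⬝ᵥ w) • p := by
  apply toQuaternion.injective
  rw [map_smul]
  refine Quaternion.ext_re_im ?_ ?_
  · simp only [toQuaternion_re, tauP_zero, sigmaX_eq_smul, dotProduct_smul, re_smul,
      smul_eq_mul, mul_comm]
  · rw [im_toQuaternion_tauP, toQuaternion_sigmaY, smul_mul_assoc, im_smul, smul_smul,
      im_mul_mul_star, normSq_toQuaternion, im_smul]
    norm_num

theorem sigmaX_tauP {x w : Fin 4 → ℝ} (hxw : ∀ i j, x i * w j = x j * w i) (y : Fin 4 → ℝ) :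
    sigmaX w (tauP x y w) = (w ⬝ᵥ w) • x := by
  rw [sigmaX_eq_smul, tauP_zero, dotProduct_smul_eq_of_cross_mul_eq hxw]

theorem sigmaY_tauP {y w : Fin 4 → ℝ} (hyw : y ⬝ᵥ w = 0) (x : Fin 4 → ℝ) :
    sigmaY w (tauP x y w) = (w ⬝ᵥ w) • y := by
  apply toQuaternion.injective
  have hre := (re_toQuaternion_mul_star y w).trans hyw
  rw [toQuaternion_sigmaY, im_toQuaternion_tauP, smul_mul_assoc, smul_smul,
    im_mul_star_mul_of_re_eq_zero hre, normSq_toQuaternion, map_smul]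
  norm_num

/-- Equalities of homogeneous coordinates are up to a nonzero scalar; the `[w]`-components are
untouched by both maps. -/
theorem stmt17 :
    (∀ w p : Fin 4 → ℝ, w ≠ 0 → p ≠ 0 →
      ∃ c : ℝ, c ≠ 0 ∧ tauP (sigmaX w p) (sigmaY w p) w = c • p) ∧
    (∀ x y w : Fin 4 → ℝ, inBl x y w → ¬(x = 0 ∧ y = 0) → w ≠ 0 →
      ∃ c : ℝ, c ≠ 0 ∧ sigmaX w (tauP x y w) = c • x ∧ sigmaY w (tauP x y w) = c • y) := by
  refine ⟨fun w p hw _ => ?_, fun x y w ⟨_, hyw, hxw⟩ _ hw => ?_⟩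
  · exact ⟨w ⬝ᵥ w, dotProduct_self_eq_zero.not.mpr hw, tauP_sigmaX_sigmaY w p⟩
  · exact ⟨w ⬝ᵥ w, dotProduct_self_eq_zero.not.mpr hw, sigmaX_tauP hxw y, sigmaY_tauP hyw x⟩
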